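/- Let (X,d) be a metric space with a fully supported, locally finite, tight Borel measure μ, and assume (X,d,μ) is amenable: there are functions εₙ : X → (0,∞) such that for each x the sequence (εₙ(x)) is strictly decreasing to 0 with 0 < μ(B(x,εₙ(x))) < ∞, for every measurable E and every x one has limsup_{n} μ(E ∩ B(x,εₙ(x)))/μ(B(x,εₙ(x))) = limsup_{ε→0⁺} μ(E ∩ B(x,ε))/μ(B(x,ε)), and for each n the map x ↦ B(x,εₙ(x)) is continuous into the measure algebra, i.e. for every x and η > 0 there is δ > 0 such that d(x,x') < δ implies μ(B(x,εₙ(x)) △ B(x',εₙ(x'))) < η. Suppose A ⊆ X is measurable and solid (D_A(x) exists for every x). Then: (a) Φ(A) and Φ(X∖A) are Gδ subsets of X; (b) Sharp(A) is an Fσ subset of X; (c) if there is r < 1 such that D_A(x) ∈ [0,r] ∪ {1} for every x, then Φ(A) is both Fσ and Gδ. -/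

import Mathlib

/-!
The density function `D` of a solid set is a pointwise limit of continuous functions. Indeed,
amenability makes each `x ↦ μ(A ∩ B(x,εₙ(x)))/μ(B(x,εₙ(x)))` continuous, and the limsup
condition, applied to `A` and to `Aᶜ` (whose density is `1 - D`), pins down both the limsup
and the liminf of these ratios, so they converge to `D`. For such a limit `g` of continuous
functions, every set `{a < g}` or `{g < a}` is `Fσ`, so every level set `{g = c}` is `Gδ`.
Now `Φ(A) = {D = 1}`, `Φ(Aᶜ) = {D = 0}` and `Sharp(A) = {0 < D} ∩ {D < 1}`, and under the
gap hypothesis `Φ(A) = {r < D}`.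
-/

open MeasureTheory Metric Set Filter Topology
open scoped symmDiff ENNReal

/-- The density of a set `A` at a point `x`: the limit, as `ε → 0⁺`, of
`μ(A ∩ B(x,ε))/μ(B(x,ε))`. -/
def HasDensity {X : Type*} [MetricSpace X] [MeasurableSpace X]
    (μ : Measure X) (A : Set X) (x : X) (v : ℝ) : Prop :=
  Tendsto (fun e : ℝ => (μ (A ∩ ball x e)).toReal / (μ (ball x e)).toReal)
    (𝓝[>] (0 : ℝ)) (𝓝 v)

/-- `Φ(A)`: the set of points where `A` has density `1`. -/
def PhiSet {X : Type*} [MetricSpace X] [MeasurableSpace X]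
    (μ : Measure X) (A : Set X) : Set X :=
  {x | HasDensity μ A x 1}

/-- `Sharp(A)`: the set of points where the density of `A` exists and lies strictly
between `0` and `1`. -/
def SharpSet {X : Type*} [MetricSpace X] [MeasurableSpace X]
    (μ : Measure X) (A : Set X) : Set X :=
  {x | ∃ v : ℝ, 0 < v ∧ v < 1 ∧ HasDensity μ A x v}

/-- A set is `Fσ` iff it is a countable union of closed sets. -/
def IsFsigma {Y : Type*} [TopologicalSpace Y] (S : Set Y) : Prop :=
  ∃ F : ℕ → Set Y, (∀ n, IsClosed (F n)) ∧ S = ⋃ n, F n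

section Fsigma

variable {Y : Type*} [TopologicalSpace Y]

theorem isFsigma_iff_isGδ_compl {S : Set Y} : IsFsigma S ↔ IsGδ Sᶜ := by
  rw [isGδ_iff_eq_iInter_nat]
  constructor
  · rintro ⟨F, hF, rfl⟩
    exact ⟨fun n => (F n)ᶜ, fun n => (hF n).isOpen_compl, compl_iUnion F⟩
  · rintro ⟨U, hU, hS⟩
    refine ⟨fun n => (U n)ᶜ, fun n => (hU n).isClosed_compl, ?_⟩
    rw [← compl_iInter, ← hS, compl_compl]

theorem IsClosed.isFsigma {S : Set Y} (hS : IsClosed S) : IsFsigma S :=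
  isFsigma_iff_isGδ_compl.2 hS.isOpen_compl.isGδ

theorem IsFsigma.iUnion {ι : Sort*} [Countable ι] {S : ι → Set Y}
    (hS : ∀ i, IsFsigma (S i)) : IsFsigma (⋃ i, S i) := by
  rw [isFsigma_iff_isGδ_compl, compl_iUnion]
  exact .iInter fun i => isFsigma_iff_isGδ_compl.1 (hS i)

theorem IsFsigma.inter {S T : Set Y} (hS : IsFsigma S) (hT : IsFsigma T) : IsFsigma (S ∩ T) := by
  rw [isFsigma_iff_isGδ_compl, compl_inter]
  exact (isFsigma_iff_isGδ_compl.1 hS).union (isFsigma_iff_isGδ_compl.1 hT)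

end Fsigma

section PointwiseLimit

variable {Y : Type*} [TopologicalSpace Y] {f : ℕ → Y → ℝ} {g : Y → ℝ}

theorem isFsigma_setOf_const_lt_of_tendsto (hf : ∀ n, Continuous (f n))
    (hg : ∀ x, Tendsto (fun n => f n x) atTop (𝓝 (g x))) (a : ℝ) :
    IsFsigma {x | a < g x} := by
  have hrepr :
      {x | a < g x} = ⋃ (k : ℕ) (N : ℕ), ⋂ n ≥ N, {x | a + 1 / (k + 1) ≤ f n x} := by
    ext x
    simp only [mem_ofPred_eq, mem_iUnion, mem_iInter]
    constructor
    · intro hx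
      obtain ⟨k, hk⟩ := exists_nat_one_div_lt (sub_pos.2 hx)
      exact ⟨k, ((hg x).eventually (eventually_ge_nhds (by linarith))).exists_forall_of_atTop⟩
    · rintro ⟨k, N, hN⟩
      have hlim : a + 1 / (k + 1) ≤ g x := ge_of_tendsto (hg x) (eventually_atTop.2 ⟨N, hN⟩)
      have hk : (0 : ℝ) < 1 / (k + 1) := Nat.one_div_pos_of_nat
      linarith
  rw [hrepr]
  exact .iUnion fun k => .iUnion fun N =>
    (isClosed_biInter fun n _ => isClosed_le continuous_const (hf n)).isFsigma

theorem isFsigma_setOf_lt_const_of_tendsto (hf : ∀ n, Continuous (f n))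
    (hg : ∀ x, Tendsto (fun n => f n x) atTop (𝓝 (g x))) (a : ℝ) :
    IsFsigma {x | g x < a} := by
  simpa only [neg_lt_neg_iff] using
    isFsigma_setOf_const_lt_of_tendsto (fun n => (hf n).neg) (fun x => (hg x).neg) (-a)

theorem isGδ_setOf_eq_const_of_tendsto (hf : ∀ n, Continuous (f n))
    (hg : ∀ x, Tendsto (fun n => f n x) atTop (𝓝 (g x))) (c : ℝ) :
    IsGδ {x | g x = c} := by
  have hrepr : {x | g x = c} = {x | c < g x}ᶜ ∩ {x | g x < c}ᶜ := by
    ext x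
    simp only [mem_ofPred_eq, mem_inter_iff, mem_compl_iff, not_lt, le_antisymm_iff]
  rw [hrepr]
  exact (isFsigma_iff_isGδ_compl.1 (isFsigma_setOf_const_lt_of_tendsto hf hg c)).inter
    (isFsigma_iff_isGδ_compl.1 (isFsigma_setOf_lt_const_of_tendsto hf hg c))

end PointwiseLimit

theorem tendsto_of_limsup_eq_of_limsup_one_sub {ι : Type*} {l : Filter ι} [l.NeBot]
    {u : ι → ℝ} (h0 : ∀ i, 0 ≤ u i) (h1 : ∀ i, u i ≤ 1) {a : ℝ}
    (hu : limsup u l = a) (hu' : limsup (fun i => 1 - u i) l = 1 - a) :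
    Tendsto u l (𝓝 a) := by
  have hbdd_above : IsBoundedUnder (· ≤ ·) l u := isBoundedUnder_of ⟨1, h1⟩
  have hbdd_below : IsBoundedUnder (· ≥ ·) l u := isBoundedUnder_of ⟨0, h0⟩
  have hinf : liminf u l = a := by
    have := limsup_const_sub l u 1 hbdd_above.isCoboundedUnder_ge hbdd_below
    linarith
  exact tendsto_of_liminf_eq_limsup hinf hu hbdd_above hbdd_below

section Measure

variable {X : Type*} [MeasurableSpace X] (μ : Measure X)

theorem abs_toReal_measure_sub_le_symmDiff {S T : Set X} (hS : μ S ≠ ∞) (hT : μ T ≠ ∞) :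
    |(μ S).toReal - (μ T).toReal| ≤ (μ (S ∆ T)).toReal := by
  have hST : μ (S ∆ T) ≠ ∞ := measure_symmDiff_ne_top hS hT
  rw [abs_sub_le_iff]
  exact ⟨(le_measureReal_sdiff hT).trans (measureReal_mono subset_union_left hST),
    (le_measureReal_sdiff hS).trans (measureReal_mono subset_union_right hST)⟩

theorem continuous_toReal_measure_inter {Y : Type*} [PseudoMetricSpace Y] {B : Y → Set X}
    (hB : ∀ y, μ (B y) ≠ ∞)
    (hcont : ∀ y, ∀ η : ℝ, 0 < η → ∃ δ > (0 : ℝ), ∀ y' : Y,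
      dist y y' < δ → μ (B y ∆ B y') < ENNReal.ofReal η)
    (C : Set X) :
    Continuous fun y => (μ (C ∩ B y)).toReal := by
  refine Metric.continuous_iff.2 fun y η hη => ?_
  obtain ⟨δ, hδ, hB'⟩ := hcont y η hη
  refine ⟨δ, hδ, fun y' hy' => ?_⟩
  have hsmall := hB' y' (by rwa [dist_comm])
  rw [Real.dist_eq]
  calc |(μ (C ∩ B y')).toReal - (μ (C ∩ B y)).toReal|
      ≤ (μ ((C ∩ B y') ∆ (C ∩ B y))).toReal :=
        abs_toReal_measure_sub_le_symmDiff μ (measure_ne_top_of_subset inter_subset_right (hB y'))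
          (measure_ne_top_of_subset inter_subset_right (hB y))
    _ ≤ (μ (B y ∆ B y')).toReal := by
        rw [← inter_symmDiff_distrib_left, symmDiff_comm]
        exact ENNReal.toReal_mono hsmall.ne_top (measure_mono inter_subset_right)
    _ < η := ENNReal.toReal_lt_of_lt_ofReal hsmall

theorem toReal_measure_inter_div_le_one (A : Set X) {B : Set X} (hB : μ B ≠ ∞) :
    (μ (A ∩ B)).toReal / (μ B).toReal ≤ 1 :=
  div_le_one_of_le₀ (ENNReal.toReal_mono hB (measure_mono inter_subset_right))
    ENNReal.toReal_nonneg

theorem toReal_measure_compl_inter_div {A B : Set X} (hA : MeasurableSet A) (hB : μ B ≠ ∞)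
    (hB0 : μ B ≠ 0) :
    (μ (Aᶜ ∩ B)).toReal / (μ B).toReal = 1 - (μ (A ∩ B)).toReal / (μ B).toReal := by
  have hsplit : (μ (B \ A)).toReal + (μ (B ∩ A)).toReal = (μ B).toReal :=
    measureReal_sdiff_add_inter hA hB
  rw [← sdiff_eq_compl_inter, inter_comm A, eq_sub_iff_add_eq, ← add_div, hsplit,
    div_self (ENNReal.toReal_pos hB0 hB).ne']

theorem tendsto_toReal_measure_inter_div {A : Set X} (hA : MeasurableSet A) {B : ℕ → Set X}
    (hB : ∀ n, μ (B n) ≠ ∞) (hB0 : ∀ n, μ (B n) ≠ 0) {v : ℝ}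
    (hlim : limsup (fun n => (μ (A ∩ B n)).toReal / (μ (B n)).toReal) atTop = v)
    (hlimc : limsup (fun n => (μ (Aᶜ ∩ B n)).toReal / (μ (B n)).toReal) atTop = 1 - v) :
    Tendsto (fun n => (μ (A ∩ B n)).toReal / (μ (B n)).toReal) atTop (𝓝 v) := by
  simp only [toReal_measure_compl_inter_div μ hA (hB _) (hB0 _)] at hlimc
  exact tendsto_of_limsup_eq_of_limsup_one_sub (fun n => by positivity)
    (fun n => toReal_measure_inter_div_le_one μ A (hB n)) hlim hlimc

end Measure

section Density

variable {X : Type*} [MetricSpace X] [MeasurableSpace X] (μ : Measure X) {A : Set X}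

theorem eventually_measure_ball_lt_top [IsLocallyFiniteMeasure μ] (x : X) :
    ∀ᶠ e in 𝓝[>] (0 : ℝ), μ (ball x e) < ∞ := by
  obtain ⟨s, hs, hsfin⟩ := μ.finiteAt_nhds x
  obtain ⟨e₀, he₀, hball⟩ := Metric.mem_nhds_iff.1 hs
  filter_upwards [Ioo_mem_nhdsGT he₀] with e he
  exact (measure_mono ((ball_subset_ball he.2.le).trans hball)).trans_lt hsfin

theorem HasDensity.compl [IsLocallyFiniteMeasure μ] [μ.IsOpenPosMeasure] (hA : MeasurableSet A)
    {x : X} {v : ℝ} (h : HasDensity μ A x v) : HasDensity μ Aᶜ x (1 - v) := by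
  refine (tendsto_const_nhds.sub h).congr' ?_
  filter_upwards [eventually_measure_ball_lt_top μ x, self_mem_nhdsWithin] with e hfin he
  exact (toReal_measure_compl_inter_div μ hA hfin.ne (measure_ball_pos μ x he).ne').symm

theorem phiSet_eq {D : X → ℝ} (hD : ∀ x, HasDensity μ A x (D x)) :
    PhiSet μ A = {x | D x = 1} := by
  ext x
  exact ⟨fun h => tendsto_nhds_unique (hD x) h,
    fun (h : D x = 1) => show HasDensity μ A x 1 from h ▸ hD x⟩

theorem sharpSet_eq {D : X → ℝ} (hD : ∀ x, HasDensity μ A x (D x)) :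
    SharpSet μ A = {x | 0 < D x} ∩ {x | D x < 1} := by
  ext x
  constructor
  · rintro ⟨v, hv0, hv1, hv⟩
    rw [tendsto_nhds_unique hv (hD x)] at hv0 hv1
    exact ⟨hv0, hv1⟩
  · rintro ⟨h0, h1⟩
    exact ⟨D x, h0, h1, hD x⟩

end Density

theorem stmt_19_general {X : Type*} [MetricSpace X] [MeasurableSpace X]
    (μ : Measure X) [IsLocallyFiniteMeasure μ]
    (hfs : ∀ U : Set X, IsOpen U → U.Nonempty → 0 < μ U)
    -- amenability data
    (ε : ℕ → X → ℝ)
    (hballpos : ∀ n x, 0 < μ (ball x (ε n x)))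
    (hballfin : ∀ n x, μ (ball x (ε n x)) < ⊤)
    (hstrong : ∀ E : Set X, MeasurableSet E → ∀ x : X,
      limsup (fun n =>
          (μ (E ∩ ball x (ε n x))).toReal / (μ (ball x (ε n x))).toReal) atTop =
      limsup (fun e : ℝ => (μ (E ∩ ball x e)).toReal / (μ (ball x e)).toReal)
        (𝓝[>] (0 : ℝ)))
    (hcontball : ∀ (n : ℕ) (x : X), ∀ η : ℝ, 0 < η → ∃ δ > (0 : ℝ), ∀ x' : X,
      dist x x' < δ → μ (ball x (ε n x) ∆ ball x' (ε n x')) < ENNReal.ofReal η)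
    -- a solid measurable set
    (A : Set X) (hA : MeasurableSet A)
    (hsolid : ∀ x : X, ∃ v : ℝ, HasDensity μ A x v) :
    IsGδ (PhiSet μ A) ∧ IsGδ (PhiSet μ Aᶜ) ∧
    IsFsigma (SharpSet μ A) ∧
    (∀ r : ℝ, r < 1 → (∀ (x : X) (v : ℝ), HasDensity μ A x v → v ≤ r ∨ v = 1) →
      IsFsigma (PhiSet μ A) ∧ IsGδ (PhiSet μ A)) := by
  have : μ.IsOpenPosMeasure := ⟨fun U hU hne => (hfs U hU hne).ne'⟩
  choose D hD using hsolid
  have hDc : ∀ x, HasDensity μ Aᶜ x (1 - D x) := fun x => (hD x).compl μ hA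
  have hcont : ∀ n, Continuous fun x =>
      (μ (A ∩ ball x (ε n x))).toReal / (μ (ball x (ε n x))).toReal := fun n => by
    have hmeas := continuous_toReal_measure_inter μ (fun x => (hballfin n x).ne) (hcontball n)
    exact (hmeas A).div (by simpa using hmeas univ)
      fun x => (ENNReal.toReal_pos (hballpos n x).ne' (hballfin n x).ne).ne'
  have hlim : ∀ x, Tendsto
      (fun n => (μ (A ∩ ball x (ε n x))).toReal / (μ (ball x (ε n x))).toReal) atTop
      (𝓝 (D x)) := fun x =>
    tendsto_toReal_measure_inter_div μ hA (fun n => (hballfin n x).ne)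
      (fun n => (hballpos n x).ne')
      ((hstrong A hA x).trans (hD x).limsup_eq) ((hstrong Aᶜ hA.compl x).trans (hDc x).limsup_eq)
  have hphi : PhiSet μ A = {x | D x = 1} := phiSet_eq μ hD
  have hphi_Gδ : IsGδ (PhiSet μ A) := hphi ▸ isGδ_setOf_eq_const_of_tendsto hcont hlim 1
  refine ⟨hphi_Gδ, ?_, ?_, fun r hr hgap => ⟨?_, hphi_Gδ⟩⟩
  · simpa only [phiSet_eq μ hDc, sub_eq_self] using isGδ_setOf_eq_const_of_tendsto hcont hlim 0
  · rw [sharpSet_eq μ hD]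
    exact (isFsigma_setOf_const_lt_of_tendsto hcont hlim 0).inter
      (isFsigma_setOf_lt_const_of_tendsto hcont hlim 1)
  · have hphi_gt : PhiSet μ A = {x | r < D x} := by
      rw [hphi]
      ext x
      exact ⟨fun (h : D x = 1) => show r < D x from h ▸ hr,
        fun h => (hgap x (D x) (hD x)).resolve_left h.not_ge⟩
    exact hphi_gt ▸ isFsigma_setOf_const_lt_of_tendsto hcont hlim r

/-- **Complexity of `Φ(A)` and `Sharp(A)` for a solid set in an amenable space.**
Let `μ` be a fully supported, locally finite, tight Borel measure on a metric space `X`,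
amenable as witnessed by `εₙ : X → (0,∞)`, and let `A` be measurable and solid. Then
(a) `Φ(A)` and `Φ(X∖A)` are `Gδ`; (b) `Sharp(A)` is `Fσ`; (c) if there is `r < 1` with
`D_A(x) ∈ [0,r] ∪ {1}` for every `x`, then `Φ(A)` is both `Fσ` and `Gδ`. -/
theorem stmt_19 {X : Type*} [MetricSpace X] [MeasurableSpace X] [BorelSpace X]
    (μ : Measure X) [IsLocallyFiniteMeasure μ]
    (hfs : ∀ U : Set X, IsOpen U → U.Nonempty → 0 < μ U)
    (htight : ∀ E : Set X, MeasurableSet E → ∀ r : ℝ≥0∞, r < μ E →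
      ∃ K : Set X, IsCompact K ∧ K ⊆ E ∧ r < μ K)
    -- amenability data
    (ε : ℕ → X → ℝ)
    (hεpos : ∀ n x, 0 < ε n x)
    (hεanti : ∀ x, StrictAnti fun n => ε n x)
    (hεlim : ∀ x, Tendsto (fun n => ε n x) atTop (𝓝 0))
    (hballpos : ∀ n x, 0 < μ (ball x (ε n x)))
    (hballfin : ∀ n x, μ (ball x (ε n x)) < ⊤)
    (hstrong : ∀ E : Set X, MeasurableSet E → ∀ x : X,
      limsup (fun n =>
          (μ (E ∩ ball x (ε n x))).toReal / (μ (ball x (ε n x))).toReal) atTop =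
      limsup (fun e : ℝ => (μ (E ∩ ball x e)).toReal / (μ (ball x e)).toReal)
        (𝓝[>] (0 : ℝ)))
    (hcontball : ∀ (n : ℕ) (x : X), ∀ η : ℝ, 0 < η → ∃ δ > (0 : ℝ), ∀ x' : X,
      dist x x' < δ → μ (ball x (ε n x) ∆ ball x' (ε n x')) < ENNReal.ofReal η)
    -- a solid measurable set
    (A : Set X) (hA : MeasurableSet A)
    (hsolid : ∀ x : X, ∃ v : ℝ, HasDensity μ A x v) :
    IsGδ (PhiSet μ A) ∧ IsGδ (PhiSet μ Aᶜ) ∧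
    IsFsigma (SharpSet μ A) ∧
    (∀ r : ℝ, r < 1 → (∀ (x : X) (v : ℝ), HasDensity μ A x v → v ≤ r ∨ v = 1) →
      IsFsigma (PhiSet μ A) ∧ IsGδ (PhiSet μ A)) :=
  stmt_19_general μ hfs ε hballpos hballfin hstrong hcontball A hA hsolid
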